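/- Let λ1, λ2 ∈ (0,1) with λ1 + λ2 < 2, and suppose C1, C2 : [0,1]² → ℝ are the bilinear functions C_i(k1,k2) = (1−k1)(1−k2)C_i(0,0) + k1(1−k2)C_i(1,0) + (1−k1)k2·C_i(0,1) + k1k2·C_i(1,1) satisfying: C1 strictly increasing in k1 and strictly decreasing in k2, C2 strictly increasing in k2 and strictly decreasing in k1, and (∂C1/∂k2)(∂C2/∂k1) > (∂C1/∂k1)(∂C2/∂k2) everywhere on [0,1]². Then every Pareto-optimal configuration (k1,k2) ∈ [0,1]² for minimizing (C1,C2) satisfies k1 = 1 or k2 = 1. -/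
import Mathlib


/-- Bilinear interpolation of four corner values. -/
def bilin (c00 c10 c01 c11 k1 k2 : ℝ) : ℝ :=
  (1 - k1) * (1 - k2) * c00 + k1 * (1 - k2) * c10 + (1 - k1) * k2 * c01 + k1 * k2 * c11

/-- Pareto optimality for minimizing (C1, C2) over [0,1]². -/
def ParetoOpt (C1 C2 : ℝ → ℝ → ℝ) (k1 k2 : ℝ) : Prop :=
  k1 ∈ Set.Icc (0 : ℝ) 1 ∧ k2 ∈ Set.Icc (0 : ℝ) 1 ∧
  ¬ ∃ l1 l2, l1 ∈ Set.Icc (0 : ℝ) 1 ∧ l2 ∈ Set.Icc (0 : ℝ) 1 ∧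
      C1 l1 l2 ≤ C1 k1 k2 ∧ C2 l1 l2 ≤ C2 k1 k2 ∧
      (C1 l1 l2 < C1 k1 k2 ∨ C2 l1 l2 < C2 k1 k2)

lemma deriv_bilin_fst (c00 c10 c01 c11 y x : ℝ) :
    deriv (fun t => bilin c00 c10 c01 c11 t y) x = (1-y)*(c10-c00)+y*(c11-c01) := by
  have h : (fun t => bilin c00 c10 c01 c11 t y)
      = fun t => ((1-y)*(c10-c00)+y*(c11-c01)) * t + ((1-y)*c00 + y*c01) := by
    funext t; simp only [bilin]; ring
  rw [h]
  have := (((hasDerivAt_id x).const_mul ((1-y)*(c10-c00)+y*(c11-c01))).add_const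
    ((1-y)*c00 + y*c01)).deriv
  simpa using this

lemma deriv_bilin_snd (c00 c10 c01 c11 x y : ℝ) :
    deriv (fun t => bilin c00 c10 c01 c11 x t) y = (1-x)*(c01-c00)+x*(c11-c10) := by
  have h : (fun t => bilin c00 c10 c01 c11 x t)
      = fun t => ((1-x)*(c01-c00)+x*(c11-c10)) * t + ((1-x)*c00 + x*c10) := by
    funext t; simp only [bilin]; ring
  rw [h]
  have := (((hasDerivAt_id y).const_mul ((1-x)*(c01-c00)+x*(c11-c10))).add_const
    ((1-x)*c00 + x*c10)).deriv
  simpa using this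

set_option maxHeartbeats 1600000 in
theorem stmt_16 (lam1 lam2 : ℝ) (h1 : 0 < lam1) (h1' : lam1 < 1) (h2 : 0 < lam2) (h2' : lam2 < 1)
    (hsum : lam1 + lam2 < 2)
    (a00 a10 a01 a11 b00 b10 b01 b11 : ℝ)
    (C1 C2 : ℝ → ℝ → ℝ)
    (hC1 : C1 = bilin a00 a10 a01 a11) (hC2 : C2 = bilin b00 b10 b01 b11)
    (hmono1 : ∀ k2 ∈ Set.Icc (0 : ℝ) 1, StrictMonoOn (fun k1 => C1 k1 k2) (Set.Icc 0 1))
    (hanti1 : ∀ k1 ∈ Set.Icc (0 : ℝ) 1, StrictAntiOn (fun k2 => C1 k1 k2) (Set.Icc 0 1))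
    (hmono2 : ∀ k1 ∈ Set.Icc (0 : ℝ) 1, StrictMonoOn (fun k2 => C2 k1 k2) (Set.Icc 0 1))
    (hanti2 : ∀ k2 ∈ Set.Icc (0 : ℝ) 1, StrictAntiOn (fun k1 => C2 k1 k2) (Set.Icc 0 1))
    (hcross : ∀ k1 ∈ Set.Icc (0 : ℝ) 1, ∀ k2 ∈ Set.Icc (0 : ℝ) 1,
      (deriv (fun t => C1 t k2) k1) * (deriv (fun t => C2 k1 t) k2) <
        (deriv (fun t => C1 k1 t) k2) * (deriv (fun t => C2 t k2) k1)) :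
    ∀ k1 k2 : ℝ, ParetoOpt C1 C2 k1 k2 → k1 = 1 ∨ k2 = 1 := by
  rintro k1 k2 ⟨hk1, hk2, hnot⟩
  by_contra hcon
  push_neg at hcon
  obtain ⟨hne1, hne2⟩ := hcon
  have hk1' : k1 < 1 := lt_of_le_of_ne hk1.2 hne1
  have hk2' : k2 < 1 := lt_of_le_of_ne hk2.2 hne2
  have h01 : (0:ℝ) ∈ Set.Icc (0:ℝ) 1 := by constructor <;> norm_num
  have h11 : (1:ℝ) ∈ Set.Icc (0:ℝ) 1 := by constructor <;> norm_num
  -- cross-derivative inequality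
  have hcr0 := hcross k1 hk1 k2 hk2
  rw [hC1, hC2, deriv_bilin_fst, deriv_bilin_snd, deriv_bilin_snd, deriv_bilin_fst] at hcr0
  set A : ℝ := (1-k2)*(a10-a00)+k2*(a11-a01) with hAdef
  set B : ℝ := (1-k1)*(a01-a00)+k1*(a11-a10) with hBdef
  set E : ℝ := (1-k2)*(b10-b00)+k2*(b11-b01) with hEdef
  set D : ℝ := (1-k1)*(b01-b00)+k1*(b11-b10) with hDdef
  clear_value A B E D
  have hA : 0 < A := by
    have := hmono1 k2 hk2 h01 h11 one_pos
    simp only [hC1, bilin] at this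
    rw [hAdef]; nlinarith [this]
  have hB : B < 0 := by
    have := hanti1 k1 hk1 h01 h11 one_pos
    simp only [hC1, bilin] at this
    rw [hBdef]; nlinarith [this]
  have hD : 0 < D := by
    have := hmono2 k1 hk1 h01 h11 one_pos
    simp only [hC2, bilin] at this
    rw [hDdef]; nlinarith [this]
  have hE : E < 0 := by
    have := hanti2 k2 hk2 h01 h11 one_pos
    simp only [hC2, bilin] at this
    rw [hEdef]; nlinarith [this]
  have hB' : 0 < -B := by linarith
  have hE' : 0 < -E := by linarith
  have hlt : A/(-B) < (-E)/D := by
    rw [div_lt_div_iff₀ hB' hD]; nlinarith [hcr0]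
  set t : ℝ := (A/(-B) + (-E)/D)/2 with htdef
  clear_value t
  have ht0 : 0 < A/(-B) := div_pos hA hB'
  have ht0' : 0 < (-E)/D := div_pos hE' hD
  have ht : 0 < t := by rw [htdef]; linarith
  have ht1 : A/(-B) < t := by rw [htdef]; linarith
  have ht2 : t < (-E)/D := by rw [htdef]; linarith
  have hAtB : A + t*B < 0 := by
    have := (div_lt_iff₀ hB').mp ht1
    nlinarith
  have hEtD : E + t*D < 0 := by
    have := (lt_div_iff₀ hD).mp ht2
    linarith
  set m1 : ℝ := a00 - a10 - a01 + a11 with hm1def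
  set m2 : ℝ := b00 - b10 - b01 + b11 with hm2def
  set M : ℝ := t*(|m1|+|m2|)+1 with hMdef
  clear_value m1 m2 M
  have hM : 0 < M := by
    have h' : 0 ≤ t*(|m1|+|m2|) := mul_nonneg ht.le (by positivity)
    rw [hMdef]; linarith
  set s : ℝ := min (min (1-k1) ((1-k2)/t)) (min ((-(A+t*B))/M) ((-(E+t*D))/M)) with hsdef
  clear_value s
  have hs0 : 0 < s := by
    rw [hsdef]
    apply lt_min (lt_min (by linarith) (div_pos (by linarith) ht))
    exact lt_min (div_pos (by linarith) hM) (div_pos (by linarith) hM)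
  have hs1 : s ≤ 1 - k1 := by
    rw [hsdef]; exact le_trans (min_le_left _ _) (min_le_left _ _)
  have hs2 : s * t ≤ 1 - k2 := by
    have h : s ≤ (1-k2)/t := by
      rw [hsdef]; exact le_trans (min_le_left _ _) (min_le_right _ _)
    exact (le_div_iff₀ ht).mp h
  have hs3 : s * M ≤ -(A+t*B) := by
    have h : s ≤ (-(A+t*B))/M := by
      rw [hsdef]; exact le_trans (min_le_right _ _) (min_le_left _ _)
    exact (le_div_iff₀ hM).mp h
  have hs4 : s * M ≤ -(E+t*D) := by
    have h : s ≤ (-(E+t*D))/M := by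
      rw [hsdef]; exact le_trans (min_le_right _ _) (min_le_right _ _)
    exact (le_div_iff₀ hM).mp h
  have habs1 : s * (t * m1) < s * M := by
    apply mul_lt_mul_of_pos_left _ hs0
    calc t * m1 ≤ t * |m1| := mul_le_mul_of_nonneg_left (le_abs_self m1) ht.le
      _ < M := by
        rw [hMdef, mul_add]
        have h' := mul_nonneg ht.le (abs_nonneg m2); linarith
  have habs2 : s * (t * m2) < s * M := by
    apply mul_lt_mul_of_pos_left _ hs0
    calc t * m2 ≤ t * |m2| := mul_le_mul_of_nonneg_left (le_abs_self m2) ht.le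
      _ < M := by
        rw [hMdef, mul_add]
        have h' := mul_nonneg ht.le (abs_nonneg m1); linarith
  have hexp1 : C1 (k1+s) (k2+s*t) = C1 k1 k2 + s*A + (s*t)*B + s*(s*t)*m1 := by
    simp only [hC1, bilin, hAdef, hBdef, hm1def]; ring
  have hexp2 : C2 (k1+s) (k2+s*t) = C2 k1 k2 + s*E + (s*t)*D + s*(s*t)*m2 := by
    simp only [hC2, bilin, hEdef, hDdef, hm2def]; ring
  have hlt1 : C1 (k1+s) (k2+s*t) < C1 k1 k2 := by
    rw [hexp1]
    have hkey : s * (A + t*B + s*(t*m1)) < 0 := by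
      have h9 : A + t*B + s*(t*m1) < 0 := by nlinarith [habs1, hs3, hs0]
      exact mul_neg_of_pos_of_neg hs0 h9
    nlinarith [hkey]
  have hlt2 : C2 (k1+s) (k2+s*t) < C2 k1 k2 := by
    rw [hexp2]
    have hkey : s * (E + t*D + s*(t*m2)) < 0 := by
      have h9 : E + t*D + s*(t*m2) < 0 := by nlinarith [habs2, hs4, hs0]
      exact mul_neg_of_pos_of_neg hs0 h9
    nlinarith [hkey]
  exact hnot ⟨k1+s, k2+s*t,
    ⟨by linarith [hk1.1], by linarith⟩,
    ⟨by linarith [hk2.1, (mul_pos hs0 ht).le], by linarith⟩,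
    hlt1.le, hlt2.le, Or.inl hlt1⟩
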